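/- arXiv:alg-geom/9602008 — 2 statements merged into one kernel-verified Lean document; each statement's English description precedes it below -/
import Mathlib

section
/- For every integer n ≥ 1, setting k = 2n, the product over r = 1, …, 2n−1 of (4·sin²(rπ/(2n)))^{⌊(r+1)/2⌋} equals 2^{n+1}·n^n. -/
open Real Finset

/-- The function `f_k(r) = 4 sin²(rπ/k)`. -/
noncomputable def f (k : ℕ) (r : ℝ) : ℝ := 4 * Real.sin (r * Real.pi / k) ^ 2

/-!
Write `e(r) = ⌊(r+1)/2⌋`. Since `f_{2n}(2n - r) = f_{2n}(r)` and `e(r) + e(2n - r) = n + (r mod 2)`,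
the square of the product is `(∏ f_{2n}(r))^n · ∏_{r odd} f_{2n}(r)`. Everything then follows from
the classical identity `∏_{r=1}^{k-1} 2 sin(rπ/k) = k`, which is the norm of
`∏_{r=1}^{k-1} (1 - ζ^r) = k` for a primitive `k`-th root of unity `ζ`: the full product of the
`f_{2n}(r)` is `(2n)²`, the even terms are the values of `f_n` and give `n²`, so the odd terms
give `4`.
-/

theorem prod_two_sin_mul_pi_div (k : ℕ) (hk : k ≠ 0) :
    ∏ r ∈ Icc 1 (k - 1), 2 * sin (r * π / k) = k := by
  obtain ⟨m, rfl⟩ : ∃ m, k = m + 1 := ⟨k - 1, by omega⟩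
  have hroots := (Complex.isPrimitiveRoot_exp (m + 1) hk).prod_one_sub_pow_eq_order
  apply_fun (‖·‖) at hroots
  rw [norm_prod, ← Nat.cast_succ, Complex.norm_natCast] at hroots
  rw [Nat.add_sub_cancel, ← Ico_add_one_right_eq_Icc, prod_Ico_eq_prod_range, Nat.add_sub_cancel]
  refine Eq.trans (prod_congr rfl fun j hj => ?_) hroots
  set θ : ℝ := ((1 + j : ℕ) : ℝ) * π / (m + 1 : ℕ) with hθ_def
  have hθ : 0 ≤ θ ∧ θ ≤ π := by
    have hj' : ((1 + j : ℕ) : ℝ) ≤ (m + 1 : ℕ) := by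
      rw [mem_range] at hj
      exact_mod_cast (by omega : 1 + j ≤ m + 1)
    refine ⟨by positivity, ?_⟩
    rw [hθ_def, mul_div_right_comm]
    exact mul_le_of_le_one_left pi_pos.le (div_le_one_of_le₀ hj' (by positivity))
  have hexp : ((j + 1 : ℕ) : ℂ) * (2 * π * Complex.I / (m + 1 : ℕ)) = Complex.I * (2 * θ : ℝ) := by
    push_cast [θ]
    ring
  rw [← Complex.exp_nat_mul, norm_sub_rev, hexp, Complex.norm_exp_I_mul_ofReal_sub_one,
    mul_div_cancel_left₀ _ two_ne_zero, Real.norm_eq_abs, abs_of_nonneg]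
  exact mul_nonneg zero_le_two (sin_nonneg_of_nonneg_of_le_pi hθ.1 hθ.2)

theorem prod_Icc_reflect {M : Type*} [CommMonoid M] (g : ℕ → M) (k : ℕ) :
    ∏ r ∈ Icc 1 (k - 1), g (k - r) = ∏ r ∈ Icc 1 (k - 1), g r := by
  refine prod_nbij' (k - ·) (k - ·) ?_ ?_ ?_ ?_ fun r _ => rfl
  all_goals intro r hr; simp only [mem_Icc] at hr ⊢; omega

lemma f_nonneg (k : ℕ) (r : ℝ) : 0 ≤ f k r := by
  unfold f
  positivity

lemma f_eq_sq (k : ℕ) (r : ℝ) : f k r = (2 * sin (r * π / k)) ^ 2 := by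
  unfold f
  ring

lemma f_two_mul (k : ℕ) (r : ℝ) : f (2 * k) (2 * r) = f k r := by
  rw [f, f, Nat.cast_mul, Nat.cast_two, mul_assoc, mul_div_mul_left _ _ two_ne_zero]

lemma f_self_sub {k r : ℕ} (h : r ≤ k) : f k ((k - r : ℕ) : ℝ) = f k r := by
  rcases eq_or_ne k 0 with rfl | hk
  · simp [f]
  rw [f, f, Nat.cast_sub h, sub_mul, sub_div, mul_div_cancel_left₀ _ (by exact_mod_cast hk),
    sin_pi_sub]

lemma prod_f (k : ℕ) (hk : k ≠ 0) : ∏ r ∈ Icc 1 (k - 1), f k r = (k : ℝ) ^ 2 := by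
  simp only [f_eq_sq, prod_pow, prod_two_sin_mul_pi_div k hk]

lemma prod_f_even (n : ℕ) (hn : n ≠ 0) :
    ∏ r ∈ Icc 1 (2 * n - 1) with Even r, f (2 * n) r = (n : ℝ) ^ 2 := by
  rw [← prod_f n hn]
  refine prod_nbij' (· / 2) (2 * ·) ?_ ?_ ?_ ?_ fun r hr => ?_
  any_goals intro r hr; simp only [mem_filter, mem_Icc, Nat.even_iff] at hr ⊢; omega
  obtain ⟨s, rfl⟩ := (mem_filter.1 hr).2
  rw [← two_mul, Nat.mul_div_cancel_left s two_pos, Nat.cast_mul, Nat.cast_two, f_two_mul]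

lemma prod_f_odd (n : ℕ) (hn : n ≠ 0) :
    ∏ r ∈ Icc 1 (2 * n - 1) with ¬ Even r, f (2 * n) r = 4 := by
  have hsplit := prod_filter_mul_prod_filter_not (Icc 1 (2 * n - 1)) Even (fun r => f (2 * n) r)
  rw [prod_f_even n hn, prod_f _ (by omega)] at hsplit
  refine mul_left_cancel₀ (pow_ne_zero 2 (Nat.cast_ne_zero.2 hn)) (hsplit.trans ?_)
  push_cast
  ring

lemma sq_prod_f_pow (n : ℕ) (hn : n ≠ 0) :
    (∏ r ∈ Icc 1 (2 * n - 1), f (2 * n) (r : ℝ) ^ ((r + 1) / 2)) ^ 2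
      = (((2 * n : ℕ) : ℝ) ^ 2) ^ n * 4 := by
  have hexp : ∀ r ∈ Icc 1 (2 * n - 1), (r + 1) / 2 + (2 * n - r + 1) / 2 = n + r % 2 := by
    intro r hr
    rw [mem_Icc] at hr
    omega
  calc
    _ = (∏ r ∈ Icc 1 (2 * n - 1), f (2 * n) (r : ℝ) ^ ((r + 1) / 2)) *
        ∏ r ∈ Icc 1 (2 * n - 1), f (2 * n) ((2 * n - r : ℕ) : ℝ) ^ ((2 * n - r + 1) / 2) := by
      rw [sq, prod_Icc_reflect (fun r => f (2 * n) (r : ℝ) ^ ((r + 1) / 2))]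
    _ = ∏ r ∈ Icc 1 (2 * n - 1), f (2 * n) r ^ n * f (2 * n) r ^ (r % 2) := by
      rw [← prod_mul_distrib]
      refine prod_congr rfl fun r hr => ?_
      rw [f_self_sub (by rw [mem_Icc] at hr; omega), ← pow_add, ← pow_add, hexp r hr]
    _ = (((2 * n : ℕ) : ℝ) ^ 2) ^ n * 4 := by
      rw [prod_mul_distrib, prod_pow, prod_f _ (by omega), ← prod_f_odd n hn, prod_filter]
      congr 1
      refine prod_congr rfl fun r _ => ?_
      rcases Nat.mod_two_eq_zero_or_one r with h | h <;> simp [Nat.even_iff, h]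

/-- For every `n ≥ 1`, with `k = 2n`:
`∏_{r=1}^{2n-1} (4 sin²(rπ/(2n)))^⌊(r+1)/2⌋ = 2^{n+1} n^n`. -/
theorem prod_f_pow_even' (n : ℕ) (hn : 1 ≤ n) :
    ∏ r ∈ Finset.Icc 1 (2 * n - 1), f (2 * n) (r : ℝ) ^ ((r + 1) / 2)
      = 2 ^ (n + 1) * (n : ℝ) ^ n := by
  have hP : 0 ≤ ∏ r ∈ Icc 1 (2 * n - 1), f (2 * n) (r : ℝ) ^ ((r + 1) / 2) :=
    prod_nonneg fun r _ => pow_nonneg (f_nonneg _ _) _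
  rw [← pow_left_inj₀ hP (by positivity) two_ne_zero, sq_prod_f_pow n (by omega)]
  push_cast
  rw [← pow_mul, mul_pow, mul_pow, ← pow_mul, ← pow_mul, add_mul, pow_add, mul_comm n 2]
  ring
end

section
/- Fix integers n ≥ 2 and g ≥ 2. Consider all n-tuples of integers 0 < u₁ < u₂ < ⋯ < u_n such that u_{n−1} + u_n < 2n+1. Then the sum over all such tuples U of (4·(2n+1)^n / Φ_{2n+1}(U))^{g−1} equals 2^{2g−1}. -/
/-- `Φ_k(U) = ∏_{1 ≤ i < j ≤ n} f_k(u_i - u_j) f_k(u_i + u_j) · ∏_i f_k(u_i)`. -/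
noncomputable def Phi (k n : ℕ) (u : Fin n → ℤ) : ℝ :=
  (∏ i : Fin n, ∏ j ∈ Finset.univ.filter (fun j => i < j),
    f k ((u i : ℝ) - (u j : ℝ)) * f k ((u i : ℝ) + (u j : ℝ))) *
  ∏ i : Fin n, f k ((u i : ℝ))

/-!
The admissible tuples are exactly `(1, …, n)` and `(1, …, n-1, n+1)`: strict monotonicity
forces `u_i ≥ i`, and `u_{n-1} + u_n ≤ 2n` then pins down `u_{n-1} = n - 1`.
For both tuples the `j`-th row of `Φ_{2n+1}` (the factors pairing `u_j` with the smaller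
entries, and `f(u_j)`) is `∏ f(r)` over a window of `2j - 1` consecutive integers, which by
`f(k - x) = f(x)` may be taken to be `1, …, 2j - 1`. Rows `j` and `n + 1 - j` together tile
`1, …, 2n` up to that reflection, and `∏_{r=1}^{2n} f(r) = ∏ |1 - ζ^r|² = (2n+1)²` for a
primitive `(2n+1)`-th root of unity `ζ`. Hence `Φ_{2n+1}(U) = (2n+1)^n` for both tuples, every
term of the sum is `4^{g-1}`, and the sum is `2 · 4^{g-1}`.
-/

open Finset

lemma f_neg (k : ℕ) (x : ℝ) : f k (-x) = f k x := by
  simp [f, neg_mul, neg_div]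

lemma f_natCast_sub (k : ℕ) (x : ℝ) : f k (k - x) = f k x := by
  rcases eq_or_ne k 0 with rfl | hk
  · simp [f]
  · have hθ : (k - x) * Real.pi / k = Real.pi - x * Real.pi / k := by field_simp
    rw [f, hθ, Real.sin_pi_sub, f]

lemma f_eq_norm_sq (k : ℕ) (x : ℝ) :
    f k x = ‖Complex.exp (Complex.I * ↑(2 * Real.pi * x / k)) - 1‖ ^ 2 := by
  rw [Complex.norm_exp_I_mul_ofReal_sub_one, Real.norm_eq_abs, sq_abs, f]
  ring_nf

lemma prod_range_f_reflect (k m : ℕ) (a b : ℝ) (h : a + b + m = k + 1) :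
    ∏ r ∈ range m, f k (a + r) = ∏ r ∈ range m, f k (b + r) := by
  rw [← prod_range_reflect]
  refine prod_congr rfl fun r hr => ?_
  have hr : r < m := mem_range.mp hr
  rw [← f_natCast_sub k (b + r), Nat.cast_sub (by omega : r ≤ m - 1),
    Nat.cast_sub (by omega : 1 ≤ m)]
  congr 1
  push_cast
  linarith

/-- `∏_{r=1}^{k-1} |1 - ζ^r|² = k²` for `ζ` a primitive `k`-th root of unity, since
`∏_{r=1}^{k-1} (X - ζ^r) = 1 + X + ⋯ + X^{k-1}`. -/
lemma prod_range_f_eq_sq (m : ℕ) : ∏ r ∈ range m, f (m + 1) (1 + r) = ((m : ℝ) + 1) ^ 2 := by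
  have hζ := Complex.isPrimitiveRoot_exp (m + 1) (by omega)
  have key := congrArg (‖·‖ ^ 2) hζ.prod_one_sub_pow_eq_order
  simp only [norm_prod, ← prod_pow] at key
  calc ∏ r ∈ range m, f (m + 1) (1 + r)
      _ = ∏ r ∈ range m,
          ‖1 - Complex.exp (2 * Real.pi * Complex.I / (m + 1 : ℕ)) ^ (r + 1)‖ ^ 2 := by
        refine prod_congr rfl fun r _ => ?_
        rw [f_eq_norm_sq, ← norm_neg, neg_sub, ← Complex.exp_nat_mul]
        push_cast
        ring_nf
      _ = ((m : ℝ) + 1) ^ 2 := by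
        rw [key, ← Nat.cast_succ, Complex.norm_natCast, Nat.cast_succ]

lemma prod_range_f_mul_prod_range_f (a b : ℕ) :
    (∏ r ∈ range a, f (a + b + 1) (1 + r)) * ∏ r ∈ range b, f (a + b + 1) (1 + r)
      = ((a + b : ℕ) + 1 : ℝ) ^ 2 := by
  rw [prod_range_f_reflect (a + b + 1) b 1 (a + 1) (by push_cast; ring), ← prod_range_f_eq_sq,
    prod_range_add]
  congr 1
  refine prod_congr rfl fun r _ => ?_
  push_cast
  ring_nf

lemma prod_range_prod_range_f_eq_pow (n : ℕ) :
    ∏ j ∈ range n, ∏ r ∈ range (2 * j + 1), f (2 * n + 1) (1 + r) = (2 * (n : ℝ) + 1) ^ n := by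
  set P : ℕ → ℝ := fun j => ∏ r ∈ range (2 * j + 1), f (2 * n + 1) (1 + r)
  have hP : ∀ j ∈ range n, P j * P (n - 1 - j) = (2 * (n : ℝ) + 1) ^ 2 := by
    intro j hj
    have hj := mem_range.mp hj
    have := prod_range_f_mul_prod_range_f (2 * j + 1) (2 * (n - 1 - j) + 1)
    rw [show 2 * j + 1 + (2 * (n - 1 - j) + 1) = 2 * n by omega] at this
    rw [this]; push_cast; ring
  have hsq : (∏ j ∈ range n, P j) ^ 2 = ((2 * (n : ℝ) + 1) ^ n) ^ 2 := by
    calc (∏ j ∈ range n, P j) ^ 2 = (∏ j ∈ range n, P j) * ∏ j ∈ range n, P (n - 1 - j) := by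
          rw [sq, prod_range_reflect]
      _ = ((2 * (n : ℝ) + 1) ^ n) ^ 2 := by
          rw [← prod_mul_distrib, prod_congr rfl hP, prod_const, card_range, ← pow_mul,
            ← pow_mul, mul_comm 2 n]
  have hnonneg : 0 ≤ ∏ j ∈ range n, P j :=
    prod_nonneg fun j _ => prod_nonneg fun r _ => by unfold f; positivity
  exact (pow_left_inj₀ hnonneg (by positivity) two_ne_zero).mp hsq

lemma Phi_comp_val (k n : ℕ) (v : ℕ → ℤ) :
    Phi k n (fun i => v i) = ∏ j ∈ range n,
      (∏ m ∈ range j, f k (v m - v j) * f k (v m + v j)) * f k (v j) := by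
  have hrange : ∀ (j : Fin n) (G : ℕ → ℝ),
      ∏ i ∈ univ.filter (· < j), G i = ∏ m ∈ range j, G m := by
    intro j G
    rw [filter_gt_eq_Iio, ← Nat.Iio_eq_range, ← Fin.map_valEmbedding_Iio, prod_map]
    rfl
  rw [Phi, prod_comm' (t' := univ) (s' := fun j => univ.filter (· < j)) (by simp [and_comm]),
    ← prod_mul_distrib, ← Fin.prod_univ_eq_prod_range]
  exact prod_congr rfl fun j _ => by rw [hrange j fun m => f k (v m - v j) * f k (v m + v j)]

lemma prod_row_eq_prod_range (k j : ℕ) (v : ℕ → ℤ) (hv : ∀ m < j, v m = m + 1) :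
    (∏ m ∈ range j, f k (v m - v j) * f k (v m + v j)) * f k (v j)
      = ∏ r ∈ range (2 * j + 1), f k (v j - j + r) := by
  set c : ℝ := (v j : ℝ)
  have hlow : ∏ m ∈ range j, f k (v m - c) = ∏ r ∈ range j, f k (c - j + r) := by
    rw [← prod_range_reflect fun r => f k (c - j + r)]
    refine prod_congr rfl fun m hm => ?_
    have hm := mem_range.mp hm
    rw [hv m hm, ← f_neg, Nat.cast_sub (by omega : m ≤ j - 1), Nat.cast_sub (by omega : 1 ≤ j)]
    congr 1
    push_cast
    ring
  have hhigh : ∏ m ∈ range j, f k (v m + c) = ∏ r ∈ range j, f k (c - j + (j + 1 + r : ℕ)) := by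
    refine prod_congr rfl fun m hm => ?_
    rw [hv m (mem_range.mp hm)]
    congr 1
    push_cast
    ring
  rw [prod_mul_distrib, hlow, hhigh, show 2 * j + 1 = j + 1 + j by ring, prod_range_add,
    prod_range_succ, sub_add_cancel]
  ring

def consecTuple (n : ℕ) : Fin n → ℤ := fun i => i + 1

def bumpTuple (n : ℕ) : Fin n → ℤ := fun i => if (i : ℕ) + 1 = n then i + 2 else i + 1

lemma Phi_consecTuple (k n : ℕ) :
    Phi k n (consecTuple n) = ∏ j ∈ range n, ∏ r ∈ range (2 * j + 1), f k (1 + r) := by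
  refine (Phi_comp_val k n fun m => m + 1).trans (prod_congr rfl fun j _ => ?_)
  rw [prod_row_eq_prod_range k j _ fun m _ => rfl]
  refine prod_congr rfl fun r _ => ?_
  push_cast
  ring_nf

lemma Phi_bumpTuple (n : ℕ) :
    Phi (2 * n + 1) n (bumpTuple n)
      = ∏ j ∈ range n, ∏ r ∈ range (2 * j + 1), f (2 * n + 1) (1 + r) := by
  refine (Phi_comp_val _ n fun m => if m + 1 = n then m + 2 else m + 1).trans ?_
  cases n with
  | zero => rfl
  | succ N =>
    have hv : ∀ j ≤ N, ∀ m < j, (if m + 1 = N + 1 then (m + 2 : ℤ) else m + 1) = m + 1 :=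
      fun j hj m hm => if_neg (by omega)
    rw [prod_range_succ, prod_range_succ]
    congr 1
    · refine prod_congr rfl fun j hj => ?_
      have hj := mem_range.mp hj
      rw [prod_row_eq_prod_range _ j _ (hv j hj.le), if_neg (by omega)]
      refine prod_congr rfl fun r _ => ?_
      push_cast
      ring_nf
    · rw [prod_row_eq_prod_range _ N _ (hv N le_rfl), if_pos rfl,
        prod_range_f_reflect _ _ _ 1 (by push_cast; ring)]

lemma StrictMono.monotone_sub_val {n : ℕ} {u : Fin n → ℤ} (hu : StrictMono u) :
    Monotone fun i : Fin n => u i - i := by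
  cases n with
  | zero => exact fun i => i.elim0
  | succ n =>
    refine Fin.monotone_iff_le_succ.2 fun i => ?_
    have := hu (Fin.castSucc_lt_succ (i := i))
    simp only [Fin.val_castSucc, Fin.val_succ]
    push_cast
    omega

lemma consecTuple_ne_bumpTuple {n : ℕ} (hn : n ≠ 0) : consecTuple n ≠ bumpTuple n := by
  intro h
  have := congrFun h ⟨n - 1, by omega⟩
  simp only [consecTuple, bumpTuple, show n - 1 + 1 = n by omega, if_true] at this
  omega

lemma admissible_iff (n : ℕ) (hn : 2 ≤ n) (u : Fin n → ℤ) :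
    (StrictMono u ∧ 0 < u ⟨0, by omega⟩ ∧ u ⟨n - 2, by omega⟩ + u ⟨n - 1, by omega⟩ < 2 * n + 1)
      ↔ u = consecTuple n ∨ u = bumpTuple n := by
  constructor
  · rintro ⟨hu, hpos, hsum⟩
    set b : Fin n := ⟨n - 2, by omega⟩
    set c : Fin n := ⟨n - 1, by omega⟩
    have hmono := hu.monotone_sub_val
    have hbc : u b < u c := hu (Fin.mk_lt_mk.2 (by omega))
    have hlow : ∀ i : Fin n, (i : ℤ) + 1 ≤ u i := fun i => by
      have := hmono (show (⟨0, by omega⟩ : Fin n) ≤ i from Nat.zero_le _)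
      simp only at this
      omega
    have hb := hlow b
    have hc := hlow c
    have hhead : ∀ i : Fin n, (i : ℕ) + 1 ≠ n → u i = i + 1 := fun i hi => by
      have := hmono (show i ≤ b from Fin.mk_le_mk.2 (by omega))
      have := hlow i
      simp only [b] at *
      omega
    have hlast : ∀ i : Fin n, (i : ℕ) + 1 = n → i = c :=
      fun i hi => Fin.ext (by simp only [c]; omega)
    rcases (show u c = n ∨ u c = n + 1 by simp only [b, c] at *; omega) with h | h
    · left
      funext i
      by_cases hi : (i : ℕ) + 1 = n
      · obtain rfl := hlast i hi
        simp only [consecTuple, h, c]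
        omega
      · rw [hhead i hi, consecTuple]
    · right
      funext i
      by_cases hi : (i : ℕ) + 1 = n
      · obtain rfl := hlast i hi
        simp only [bumpTuple, h, c, hi, if_true]
        omega
      · rw [hhead i hi, bumpTuple, if_neg hi]
  · rintro (rfl | rfl)
    · refine ⟨fun i j hij => ?_, ?_, ?_⟩ <;> simp only [consecTuple, Fin.lt_def] at * <;> omega
    · refine ⟨fun i j hij => ?_, ?_, ?_⟩ <;> simp only [bumpTuple, Fin.lt_def] at * <;>
        split_ifs <;> omega

/-- For `n ≥ 2` and `g ≥ 2`, the sum over all strictly increasing `n`-tuples of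
integers `0 < u₁ < ⋯ < u_n` with `u_{n-1} + u_n < 2n+1`, of
`(4 (2n+1)^n / Φ_{2n+1}(U))^{g-1}`, equals `2^{2g-1}`.
(This is the level-2 Verlinde number `N₂⁺(Spin_{2n+1})`.) -/
theorem verlinde_N2_plus_spin_odd (n g : ℕ) (hn : 2 ≤ n) (hg : 2 ≤ g) :
    ∑ᶠ (u : {u : Fin n → ℤ //
        StrictMono u ∧
        0 < u ⟨0, by omega⟩ ∧
        u ⟨n - 2, by omega⟩ + u ⟨n - 1, by omega⟩ < 2 * n + 1}),
      (4 * (2 * n + 1 : ℝ) ^ n / Phi (2 * n + 1) n u.1) ^ (g - 1)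
    = 2 ^ (2 * g - 1) := by
  have hPhi : ∀ u ∈ ({consecTuple n, bumpTuple n} : Set (Fin n → ℤ)),
      Phi (2 * n + 1) n u = (2 * n + 1 : ℝ) ^ n := by
    rintro u (rfl | rfl)
    · rw [Phi_consecTuple, prod_range_prod_range_f_eq_pow]
    · rw [Phi_bumpTuple, prod_range_prod_range_f_eq_pow]
  calc _ = ∑ᶠ u ∈ ({consecTuple n, bumpTuple n} : Set (Fin n → ℤ)),
        (4 * (2 * n + 1 : ℝ) ^ n / Phi (2 * n + 1) n u) ^ (g - 1) := by
        refine (finsum_subtype_eq_finsum_cond _ (f := fun u =>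
          (4 * (2 * n + 1 : ℝ) ^ n / Phi (2 * n + 1) n u) ^ (g - 1))).trans
          (finsum_congr fun u => ?_)
        rw [admissible_iff n hn u]
        rfl
    _ = ∑ᶠ u ∈ ({consecTuple n, bumpTuple n} : Set (Fin n → ℤ)), (4 : ℝ) ^ (g - 1) :=
        finsum_mem_congr rfl fun u hu => by rw [hPhi u hu, mul_div_cancel_right₀ _ (by positivity)]
    _ = 2 ^ (2 * g - 1) := by
        rw [finsum_mem_pair (consecTuple_ne_bumpTuple (by omega)),
          show 2 * g - 1 = 2 * (g - 1) + 1 by omega, pow_succ, pow_mul]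
        ring
end
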